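/- Assume ‖∇_w f(w,v,z)‖ ≤ L and ‖∇_v f(w,v,z)‖ ≤ L for all w, v, z (L > 0), and for each z the map w ↦ f w v z is convex and v ↦ f w v z is concave (no smoothness assumed, no stepsize restriction). Then for every T ≥ 1, (1/(m*n)) * ∑_{r : Fin m} ∑_{k : Fin n} Real.sqrt (‖w̄_S T - w̄_{S_{rk}} T‖^2 + ‖v̄_S T - v̄_{S_{rk}} T‖^2) ≤ 2*Real.sqrt 2*L*Real.sqrt (∑_{t=1}^{T} (η t)^2) + 4*L*Real.sqrt (∑_{t=1}^{T} η t * ∑_{q=1}^{t-1} η q * λ^(t-q-1)) + (4*Real.sqrt 2*L/(m*n)) * ∑_{t=1}^{T} η t. -/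

import Mathlib

set_option linter.unusedSectionVars false

open Finset RealInnerProductSpace

section AuxST18
variable {F : Type*} [NormedAddCommGroup F] [InnerProductSpace ℝ F] [CompleteSpace F]

variable {F : Type*} [NormedAddCommGroup F] [InnerProductSpace ℝ F] [CompleteSpace F]

lemma my_sqrt_add_le {a b : ℝ} (ha : 0 ≤ a) (hb : 0 ≤ b) :
    Real.sqrt (a + b) ≤ Real.sqrt a + Real.sqrt b := by
  rw [show a + b = a + b from rfl]
  have h : a + b ≤ (Real.sqrt a + Real.sqrt b) ^ 2 := by
    have := Real.sq_sqrt ha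
    have := Real.sq_sqrt hb
    nlinarith [Real.sqrt_nonneg a, Real.sqrt_nonneg b]
  calc Real.sqrt (a + b) ≤ Real.sqrt ((Real.sqrt a + Real.sqrt b) ^ 2) := Real.sqrt_le_sqrt h
    _ = Real.sqrt a + Real.sqrt b := Real.sqrt_sq (by positivity)

lemma my_minkowski {m : ℕ} (a b : Fin m → F) :
    Real.sqrt (∑ i, ‖a i + b i‖ ^ 2) ≤
      Real.sqrt (∑ i, ‖a i‖ ^ 2) + Real.sqrt (∑ i, ‖b i‖ ^ 2) := by
  let A : PiLp 2 (fun _ : Fin m => F) := WithLp.toLp 2 a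
  let B : PiLp 2 (fun _ : Fin m => F) := WithLp.toLp 2 b
  have hA : Real.sqrt (∑ i, ‖a i‖ ^ 2) = ‖A‖ := by
    rw [← PiLp.norm_sq_eq_of_L2, Real.sqrt_sq (norm_nonneg _)]
  have hB : Real.sqrt (∑ i, ‖b i‖ ^ 2) = ‖B‖ := by
    rw [← PiLp.norm_sq_eq_of_L2, Real.sqrt_sq (norm_nonneg _)]
  have hAB : Real.sqrt (∑ i, ‖a i + b i‖ ^ 2) = ‖A + B‖ := by
    rw [show A + B = WithLp.toLp 2 (a + b) from rfl, PiLp.norm_eq_of_L2]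
    rfl
  rw [hA, hB, hAB]
  exact norm_add_le A B

lemma my_grad_convex {g : F → ℝ} (hg : ConvexOn ℝ Set.univ g) (hd : Differentiable ℝ g)
    (x y : F) : ⟪gradient g x, y - x⟫ ≤ g y - g x := by
  set φ : ℝ → ℝ := fun t => g (x + t • (y - x)) with hφ
  have hline : ∀ t : ℝ, x + t • (y - x) = (AffineMap.lineMap x y) t := by
    intro t
    simp [AffineMap.lineMap_apply_module]
    module
  have hφconv : ConvexOn ℝ Set.univ φ := by
    have h := hg.comp_affineMap (AffineMap.lineMap x y)
    have : φ = g ∘ (AffineMap.lineMap x y) := by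
      funext t; simp [φ, hline t]
    rw [this]
    simpa using h
  have hderiv : HasDerivAt φ ⟪gradient g x, y - x⟫ 0 := by
    have h1 : HasDerivAt (fun t : ℝ => x + t • (y - x)) (y - x) 0 := by
      simpa using ((hasDerivAt_id (0 : ℝ)).smul_const (y - x)).const_add x
    have h2 : HasFDerivAt g (InnerProductSpace.toDual ℝ F (gradient g x)) x :=
      ((hd x).hasGradientAt).hasFDerivAt
    have h2' : HasFDerivAt g (InnerProductSpace.toDual ℝ F (gradient g x))
        (x + (0 : ℝ) • (y - x)) := by simpa using h2
    have := h2'.comp_hasDerivAt 0 h1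
    simp only [InnerProductSpace.toDual_apply_apply] at this; exact this
  have := hφconv.le_slope_of_hasDerivAt (Set.mem_univ (0 : ℝ)) (Set.mem_univ 1)
    zero_lt_one hderiv
  rw [slope_def_field] at this
  simpa [φ] using this


lemma my_gradient_neg {h : F → ℝ} (hd : Differentiable ℝ h) (x : F) :
    gradient (fun u => -(h u)) x = -gradient h x := by
  have h2 : HasFDerivAt h (InnerProductSpace.toDual ℝ F (gradient h x)) x :=
    ((hd x).hasGradientAt).hasFDerivAt
  have h3 : HasFDerivAt (fun u => -(h u)) (-(InnerProductSpace.toDual ℝ F (gradient h x))) x :=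
    h2.neg
  have h4 : HasGradientAt (fun u => -(h u)) (-gradient h x) x := by
    rw [hasGradientAt_iff_hasFDerivAt]
    rw [map_neg]; exact h3
  exact h4.gradient

lemma my_grad_concave {g : F → ℝ} (hg : ConcaveOn ℝ Set.univ g) (hd : Differentiable ℝ g)
    (x y : F) : g y - g x ≤ ⟪gradient g x, y - x⟫ := by
  have hneg : ConvexOn ℝ Set.univ (fun u => -(g u)) := by
    simpa [Pi.neg_def] using hg.neg
  have := my_grad_convex hneg hd.neg x y
  rw [my_gradient_neg hd x, inner_neg_left] at this
  linarith

variable {W V : Type*} [NormedAddCommGroup W] [InnerProductSpace ℝ W] [CompleteSpace W]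
  [NormedAddCommGroup V] [InnerProductSpace ℝ V] [CompleteSpace V]

lemma my_monotone (f : W → V → ℝ)
    (hconv : ∀ v, ConvexOn ℝ Set.univ (fun w => f w v))
    (hconc : ∀ w, ConcaveOn ℝ Set.univ (fun v => f w v))
    (hdw : ∀ v, Differentiable ℝ (fun w => f w v))
    (hdv : ∀ w, Differentiable ℝ (fun v => f w v))
    (w w' : W) (v v' : V) :
    0 ≤ ⟪w - w', gradient (fun u => f u v) w - gradient (fun u => f u v') w'⟫
      - ⟪v - v', gradient (fun u => f w u) v - gradient (fun u => f w' u) v'⟫ := by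
  rw [real_inner_comm _ (w - w'), real_inner_comm _ (v - v')]
  have hA := my_grad_convex (hconv v) (hdw v) w w'
  have hB := my_grad_convex (hconv v') (hdw v') w' w
  have hC := my_grad_concave (hconc w) (hdv w) v v'
  have hD := my_grad_concave (hconc w') (hdv w') v' v
  have e1 : ⟪gradient (fun u => f u v) w - gradient (fun u => f u v') w', w - w'⟫
      = -⟪gradient (fun u => f u v) w, w' - w⟫ - ⟪gradient (fun u => f u v') w', w - w'⟫ := by
    rw [inner_sub_left, ← inner_neg_right]
    simp [neg_sub]
  have e2 : ⟪gradient (fun u => f w u) v - gradient (fun u => f w' u) v', v - v'⟫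
      = -⟪gradient (fun u => f w u) v, v' - v⟫ - ⟪gradient (fun u => f w' u) v', v - v'⟫ := by
    rw [inner_sub_left, ← inner_neg_right]
    simp [neg_sub]
  rw [e1, e2]
  linarith


lemma my_consensus {m : ℕ} (hm : 1 ≤ m) (P : Fin m → Fin m → ℝ)
    (hPsymm : ∀ i l, P i l = P l i) (hProw : ∀ i, ∑ l, P i l = 1)
    (lam : ℝ) (hlam0 : 0 ≤ lam)
    (hcons : ∀ x : Fin m → F, ∑ i, x i = 0 →
      ∑ i, ‖∑ l, P i l • x l‖ ^ 2 ≤ lam ^ 2 * ∑ i, ‖x i‖ ^ 2)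
    (L : ℝ) (hL : 0 ≤ L) (η : ℕ → ℝ) (hη : ∀ t, 0 ≤ η t)
    (x : ℕ → Fin m → F) (g : ℕ → Fin m → F) (hg : ∀ t i, ‖g t i‖ ≤ L)
    (x0 : F) (hx0 : ∀ i, x 0 i = x0)
    (hrec : ∀ t i, x (t + 1) i = (∑ l, P i l • x t l) + η (t + 1) • g (t + 1) i) :
    ∀ t, Real.sqrt (∑ i, ‖x t i - (m : ℝ)⁻¹ • ∑ l, x t l‖ ^ 2)
      ≤ L * Real.sqrt m * ∑ q ∈ Finset.Icc 1 t, η q * lam ^ (t - q) := by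
  have hm0 : (0 : ℝ) < m := by exact_mod_cast hm
  have hcol : ∀ l, ∑ i, P i l = 1 := by
    intro l
    rw [Finset.sum_congr rfl fun i _ => hPsymm i l]
    exact hProw l
  -- average recursion
  set xbar : ℕ → F := fun t => (m : ℝ)⁻¹ • ∑ l, x t l with hxbar
  have havg : ∀ t, xbar (t + 1) = xbar t + η (t + 1) • ((m : ℝ)⁻¹ • ∑ i, g (t + 1) i) := by
    intro t
    have h1 : ∑ i, x (t + 1) i = (∑ l, x t l) + η (t + 1) • ∑ i, g (t + 1) i := by
      rw [Finset.sum_congr rfl fun i _ => hrec t i, Finset.sum_add_distrib, ← Finset.smul_sum]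
      congr 1
      rw [Finset.sum_comm]
      rw [Finset.sum_congr rfl fun l _ => (Finset.sum_smul).symm]
      simp [hcol]
    simp only [hxbar, h1, smul_add]
    rw [smul_comm]
  -- error recursion
  set e : ℕ → Fin m → F := fun t i => x t i - xbar t with he
  have hesum : ∀ t, ∑ i, e t i = 0 := by
    intro t
    simp only [he, Finset.sum_sub_distrib]
    rw [Finset.sum_const, sub_eq_zero, Finset.card_univ, Fintype.card_fin,
      ← Nat.cast_smul_eq_nsmul ℝ, smul_smul, mul_inv_cancel₀ (ne_of_gt hm0), one_smul]
  have herec : ∀ t i, e (t + 1) i =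
      (∑ l, P i l • e t l) + η (t + 1) • (g (t + 1) i - (m : ℝ)⁻¹ • ∑ i, g (t + 1) i) := by
    intro t i
    have hPe : ∑ l, P i l • e t l = (∑ l, P i l • x t l) - xbar t := by
      simp only [he, smul_sub, Finset.sum_sub_distrib]
      congr 1
      rw [← Finset.sum_smul, hProw i, one_smul]
    show x (t + 1) i - xbar (t + 1) = _
    rw [hrec t i, havg t, hPe, smul_sub]
    abel
  have he0 : ∀ i, e 0 i = 0 := by
    intro i
    show x 0 i - xbar 0 = 0
    have : xbar 0 = x0 := by
      show (m : ℝ)⁻¹ • ∑ l, x 0 l = x0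
      rw [Finset.sum_congr rfl fun l _ => hx0 l, Finset.sum_const, Finset.card_univ,
        Fintype.card_fin, ← Nat.cast_smul_eq_nsmul ℝ, smul_smul,
        inv_mul_cancel₀ (ne_of_gt hm0), one_smul]
    rw [hx0 i, this, sub_self]
  have hvar : ∀ t, ∑ i, ‖g t i - (m : ℝ)⁻¹ • ∑ l, g t l‖ ^ 2 ≤ (m : ℝ) * L ^ 2 := by
    intro t
    set c : F := (m : ℝ)⁻¹ • ∑ l, g t l with hc
    have hsumg : ∑ l, g t l = (m : ℝ) • c := by
      rw [hc, smul_smul, mul_inv_cancel₀ (ne_of_gt hm0), one_smul]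
    have hexp : ∑ i, ‖g t i - c‖ ^ 2
        = (∑ i, ‖g t i‖ ^ 2) - (m : ℝ) * ‖c‖ ^ 2 := by
      have h1 : ∀ i : Fin m, ‖g t i - c‖ ^ 2 = ‖g t i‖ ^ 2 - 2 * ⟪g t i, c⟫ + ‖c‖ ^ 2 :=
        fun i => norm_sub_sq_real _ _
      rw [Finset.sum_congr rfl fun i _ => h1 i, Finset.sum_add_distrib,
        Finset.sum_sub_distrib, ← Finset.mul_sum, ← sum_inner, hsumg, real_inner_smul_left,
        real_inner_self_eq_norm_sq, Finset.sum_const, Finset.card_univ, Fintype.card_fin,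
        nsmul_eq_mul]
      ring
    have hb : ∑ i, ‖g t i‖ ^ 2 ≤ (m : ℝ) * L ^ 2 := by
      calc ∑ i, ‖g t i‖ ^ 2 ≤ ∑ _i : Fin m, L ^ 2 :=
            Finset.sum_le_sum fun i _ => pow_le_pow_left₀ (norm_nonneg _) (hg t i) 2
        _ = (m : ℝ) * L ^ 2 := by
            rw [Finset.sum_const, Finset.card_univ, Fintype.card_fin, nsmul_eq_mul]
    have hc2 : 0 ≤ (m : ℝ) * ‖c‖ ^ 2 := by positivity
    linarith [hexp, hb]
  have hEstep : ∀ t, Real.sqrt (∑ i, ‖e (t + 1) i‖ ^ 2)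
      ≤ lam * Real.sqrt (∑ i, ‖e t i‖ ^ 2) + η (t + 1) * (L * Real.sqrt m) := by
    intro t
    have h1 : Real.sqrt (∑ i, ‖e (t + 1) i‖ ^ 2)
        ≤ Real.sqrt (∑ i, ‖∑ l, P i l • e t l‖ ^ 2)
          + Real.sqrt (∑ i, ‖η (t + 1) • (g (t + 1) i - (m : ℝ)⁻¹ • ∑ l, g (t + 1) l)‖ ^ 2) := by
      have := my_minkowski (fun i => ∑ l, P i l • e t l)
        (fun i => η (t + 1) • (g (t + 1) i - (m : ℝ)⁻¹ • ∑ l, g (t + 1) l))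
      calc Real.sqrt (∑ i, ‖e (t + 1) i‖ ^ 2)
          = Real.sqrt (∑ i, ‖(∑ l, P i l • e t l)
              + η (t + 1) • (g (t + 1) i - (m : ℝ)⁻¹ • ∑ l, g (t + 1) l)‖ ^ 2) := by
            congr 1
            exact Finset.sum_congr rfl fun i _ => by rw [herec t i]
        _ ≤ _ := this
    have h2 : Real.sqrt (∑ i, ‖∑ l, P i l • e t l‖ ^ 2)
        ≤ lam * Real.sqrt (∑ i, ‖e t i‖ ^ 2) := by
      have := hcons (e t) (hesum t)
      calc Real.sqrt (∑ i, ‖∑ l, P i l • e t l‖ ^ 2)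
          ≤ Real.sqrt (lam ^ 2 * ∑ i, ‖e t i‖ ^ 2) := Real.sqrt_le_sqrt this
        _ = lam * Real.sqrt (∑ i, ‖e t i‖ ^ 2) := by
            rw [Real.sqrt_mul (sq_nonneg lam), Real.sqrt_sq hlam0]
    have h3 : Real.sqrt (∑ i, ‖η (t + 1) • (g (t + 1) i - (m : ℝ)⁻¹ • ∑ l, g (t + 1) l)‖ ^ 2)
        ≤ η (t + 1) * (L * Real.sqrt m) := by
      have hsm : ∀ i : Fin m, ‖η (t + 1) • (g (t + 1) i - (m : ℝ)⁻¹ • ∑ l, g (t + 1) l)‖ ^ 2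
          = η (t + 1) ^ 2 * ‖g (t + 1) i - (m : ℝ)⁻¹ • ∑ l, g (t + 1) l‖ ^ 2 := by
        intro i
        rw [norm_smul, mul_pow, Real.norm_eq_abs, sq_abs]
      rw [Finset.sum_congr rfl fun i _ => hsm i, ← Finset.mul_sum,
        Real.sqrt_mul (sq_nonneg _), Real.sqrt_sq (hη (t + 1))]
      have : Real.sqrt (∑ i, ‖g (t + 1) i - (m : ℝ)⁻¹ • ∑ l, g (t + 1) l‖ ^ 2)
          ≤ L * Real.sqrt m := by
        calc Real.sqrt (∑ i, ‖g (t + 1) i - (m : ℝ)⁻¹ • ∑ l, g (t + 1) l‖ ^ 2)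
            ≤ Real.sqrt ((m : ℝ) * L ^ 2) := Real.sqrt_le_sqrt (hvar (t + 1))
          _ = L * Real.sqrt m := by
              rw [Real.sqrt_mul (le_of_lt hm0), Real.sqrt_sq hL, mul_comm]
      exact mul_le_mul_of_nonneg_left this (hη (t + 1))
    calc Real.sqrt (∑ i, ‖e (t + 1) i‖ ^ 2) ≤ _ := h1
      _ ≤ lam * Real.sqrt (∑ i, ‖e t i‖ ^ 2) + η (t + 1) * (L * Real.sqrt m) :=
          add_le_add h2 h3
  intro t
  induction t with
  | zero =>
      simp only [Finset.Icc_self, Nat.zero_sub]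
      have : ∑ i, ‖e 0 i‖ ^ 2 = 0 := by
        rw [Finset.sum_congr rfl fun i _ => by rw [he0 i]]
        simp
      show Real.sqrt (∑ i, ‖e 0 i‖ ^ 2) ≤ _
      rw [this, Real.sqrt_zero]
      simp
  | succ t ih =>
      have step := hEstep t
      have h4 : lam * Real.sqrt (∑ i, ‖e t i‖ ^ 2)
          ≤ lam * (L * Real.sqrt m * ∑ q ∈ Finset.Icc 1 t, η q * lam ^ (t - q)) :=
        mul_le_mul_of_nonneg_left ih hlam0
      have h5 : lam * (L * Real.sqrt m * ∑ q ∈ Finset.Icc 1 t, η q * lam ^ (t - q))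
            + η (t + 1) * (L * Real.sqrt m)
          = L * Real.sqrt m * ∑ q ∈ Finset.Icc 1 (t + 1), η q * lam ^ (t + 1 - q) := by
        rw [Finset.sum_Icc_succ_top (Nat.le_add_left 1 t)]
        have hcongr : ∑ q ∈ Finset.Icc 1 t, η q * lam ^ (t + 1 - q)
            = ∑ q ∈ Finset.Icc 1 t, lam * (η q * lam ^ (t - q)) := by
          refine Finset.sum_congr rfl fun q hq => ?_
          have hq' : q ≤ t := (Finset.mem_Icc.mp hq).2
          have : t + 1 - q = (t - q) + 1 := by omega
          rw [this, pow_succ]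
          ring
        rw [hcongr, ← Finset.mul_sum]
        have : t + 1 - (t + 1) = 0 := Nat.sub_self (t + 1)
        rw [this, pow_zero]
        ring
      show Real.sqrt (∑ i, ‖e (t + 1) i‖ ^ 2) ≤ _
      calc Real.sqrt (∑ i, ‖e (t + 1) i‖ ^ 2)
          ≤ lam * Real.sqrt (∑ i, ‖e t i‖ ^ 2) + η (t + 1) * (L * Real.sqrt m) := step
        _ ≤ lam * (L * Real.sqrt m * ∑ q ∈ Finset.Icc 1 t, η q * lam ^ (t - q))
            + η (t + 1) * (L * Real.sqrt m) := by linarith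
        _ = _ := h5


lemma my_abs_inner_le (a b : F) {A B : ℝ} (hA : ‖a‖ ≤ A) (hB : ‖b‖ ≤ B) :
    |⟪a, b⟫| ≤ A * B := by
  calc |⟪a, b⟫| ≤ ‖a‖ * ‖b‖ := abs_real_inner_le_norm a b
    _ ≤ A * B := by
        have h0a := norm_nonneg a
        have h0b := norm_nonneg b
        exact mul_le_mul hA hB h0b (le_trans h0a hA)

lemma my_sum_le_sqrt {m : ℕ} (a : Fin m → ℝ) (ha : ∀ i, 0 ≤ a i) :
    ∑ i, a i ≤ Real.sqrt m * Real.sqrt (∑ i, a i ^ 2) := by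
  have h : (∑ i, a i) ^ 2 ≤ (m : ℝ) * ∑ i, a i ^ 2 := by
    have := sq_sum_le_card_mul_sum_sq (s := (univ : Finset (Fin m))) (f := a)
    simpa using this
  calc ∑ i, a i = Real.sqrt ((∑ i, a i) ^ 2) :=
        (Real.sqrt_sq (Finset.sum_nonneg fun i _ => ha i)).symm
    _ ≤ Real.sqrt ((m : ℝ) * ∑ i, a i ^ 2) := Real.sqrt_le_sqrt h
    _ = Real.sqrt m * Real.sqrt (∑ i, a i ^ 2) := Real.sqrt_mul (Nat.cast_nonneg m) _


end AuxST18

section MainST18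
variable {W V Z : Type*}
  [NormedAddCommGroup W] [InnerProductSpace ℝ W] [CompleteSpace W]
  [NormedAddCommGroup V] [InnerProductSpace ℝ V] [CompleteSpace V]

set_option maxHeartbeats 1600000 in
lemma aux_main {m : ℕ} (hm : 1 ≤ m)
    (f : W → V → Z → ℝ) (L : ℝ) (hL : 0 < L)
    (hdiffw : ∀ v z, Differentiable ℝ (fun w => f w v z))
    (hdiffv : ∀ w z, Differentiable ℝ (fun v => f w v z))
    (hgradw : ∀ w v z, ‖gradient (fun u => f u v z) w‖ ≤ L)
    (hgradv : ∀ w v z, ‖gradient (fun u => f w u z) v‖ ≤ L)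
    (hconv : ∀ v z, ConvexOn ℝ Set.univ (fun w => f w v z))
    (hconc : ∀ w z, ConcaveOn ℝ Set.univ (fun v => f w v z))
    (P : Fin m → Fin m → ℝ) (hPsymm : ∀ i l, P i l = P l i) (hProw : ∀ i, ∑ l, P i l = 1)
    (lam : ℝ) (hlam0 : 0 ≤ lam)
    (hconsW : ∀ x : Fin m → W, ∑ i, x i = 0 →
      ∑ i, ‖∑ l, P i l • x l‖ ^ 2 ≤ lam ^ 2 * ∑ i, ‖x i‖ ^ 2)
    (hconsV : ∀ x : Fin m → V, ∑ i, x i = 0 →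
      ∑ i, ‖∑ l, P i l • x l‖ ^ 2 ≤ lam ^ 2 * ∑ i, ‖x i‖ ^ 2)
    (η : ℕ → ℝ) (hη : ∀ t, 0 ≤ η t)
    (w0 : W) (v0 : V)
    (ζ ζ' : ℕ → Fin m → Z) (r : Fin m)
    (hζ : ∀ t i, i ≠ r → ζ t i = ζ' t i)
    (χ : ℕ → ℝ) (hχ0 : ∀ t, 0 ≤ χ t) (hχ1 : ∀ t, ζ t r ≠ ζ' t r → χ t = 1)
    (w w' : ℕ → Fin m → W) (v v' : ℕ → Fin m → V)
    (hw0 : ∀ i, w 0 i = w0) (hv0 : ∀ i, v 0 i = v0)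
    (hw'0 : ∀ i, w' 0 i = w0) (hv'0 : ∀ i, v' 0 i = v0)
    (hwrec : ∀ t i, w (t + 1) i = (∑ l, P i l • w t l) -
      η (t + 1) • gradient (fun u => f u (v t i) (ζ (t + 1) i)) (w t i))
    (hvrec : ∀ t i, v (t + 1) i = (∑ l, P i l • v t l) +
      η (t + 1) • gradient (fun u => f (w t i) u (ζ (t + 1) i)) (v t i))
    (hw'rec : ∀ t i, w' (t + 1) i = (∑ l, P i l • w' t l) -
      η (t + 1) • gradient (fun u => f u (v' t i) (ζ' (t + 1) i)) (w' t i))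
    (hv'rec : ∀ t i, v' (t + 1) i = (∑ l, P i l • v' t l) +
      η (t + 1) • gradient (fun u => f (w' t i) u (ζ' (t + 1) i)) (v' t i))
    (T : ℕ) :
    Real.sqrt (‖((m : ℝ)⁻¹ • ∑ i, w T i) - ((m : ℝ)⁻¹ • ∑ i, w' T i)‖ ^ 2
        + ‖((m : ℝ)⁻¹ • ∑ i, v T i) - ((m : ℝ)⁻¹ • ∑ i, v' T i)‖ ^ 2)
      ≤ Real.sqrt (8 * L ^ 2 * ∑ t ∈ Finset.Icc 1 T, η t ^ 2)
        + Real.sqrt (16 * L ^ 2 * ∑ t ∈ Finset.Icc 1 T,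
            η t * ∑ q ∈ Finset.Icc 1 (t - 1), η q * lam ^ (t - q - 1))
        + (4 * Real.sqrt 2 * L / m) * ∑ t ∈ Finset.Icc 1 T, η t * χ t := by
  classical
  have hm0 : (0 : ℝ) < m := by exact_mod_cast hm
  have hm0' : (m : ℝ) ≠ 0 := ne_of_gt hm0
  -- abbreviations
  set wb : ℕ → W := fun t => (m : ℝ)⁻¹ • ∑ i, w t i with hwb
  set wb' : ℕ → W := fun t => (m : ℝ)⁻¹ • ∑ i, w' t i with hwb'
  set vb : ℕ → V := fun t => (m : ℝ)⁻¹ • ∑ i, v t i with hvb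
  set vb' : ℕ → V := fun t => (m : ℝ)⁻¹ • ∑ i, v' t i with hvb'
  set Gw : ℕ → Fin m → W := fun t i => gradient (fun u => f u (v t i) (ζ (t + 1) i)) (w t i)
    with hGw
  set Gw' : ℕ → Fin m → W := fun t i => gradient (fun u => f u (v' t i) (ζ' (t + 1) i)) (w' t i)
    with hGw'
  set Hw : ℕ → Fin m → W := fun t i => gradient (fun u => f u (v' t i) (ζ (t + 1) i)) (w' t i)
    with hHw
  set Gv : ℕ → Fin m → V := fun t i => gradient (fun u => f (w t i) u (ζ (t + 1) i)) (v t i)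
    with hGv
  set Gv' : ℕ → Fin m → V := fun t i => gradient (fun u => f (w' t i) u (ζ' (t + 1) i)) (v' t i)
    with hGv'
  set Hv : ℕ → Fin m → V := fun t i => gradient (fun u => f (w' t i) u (ζ (t + 1) i)) (v' t i)
    with hHv
  set Dw : ℕ → W := fun t => wb t - wb' t with hDw
  set Dv : ℕ → V := fun t => vb t - vb' t with hDv
  set U : ℕ → ℝ := fun t => ‖Dw t‖ ^ 2 + ‖Dv t‖ ^ 2 with hU
  set u : ℕ → ℝ := fun t => Real.sqrt (U t) with hu
  set σ : ℕ → ℝ := fun t => ∑ q ∈ Finset.Icc 1 t, η q * lam ^ (t - q) with hσ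
  have hcol : ∀ l, ∑ i, P i l = 1 := by
    intro l
    rw [Finset.sum_congr rfl fun i _ => hPsymm i l]
    exact hProw l
  -- basic positivity
  have hU0 : ∀ t, 0 ≤ U t := fun t => add_nonneg (sq_nonneg _) (sq_nonneg _)
  have hu0 : ∀ t, 0 ≤ u t := fun t => Real.sqrt_nonneg _
  have hσ0 : ∀ t, 0 ≤ σ t :=
    fun t => Finset.sum_nonneg fun q _ => mul_nonneg (hη q) (pow_nonneg hlam0 _)
  -- gradient norm bounds
  have hGwb : ∀ t i, ‖Gw t i‖ ≤ L := fun t i => hgradw _ _ _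
  have hGw'b : ∀ t i, ‖Gw' t i‖ ≤ L := fun t i => hgradw _ _ _
  have hHwb : ∀ t i, ‖Hw t i‖ ≤ L := fun t i => hgradw _ _ _
  have hGvb : ∀ t i, ‖Gv t i‖ ≤ L := fun t i => hgradv _ _ _
  have hGv'b : ∀ t i, ‖Gv' t i‖ ≤ L := fun t i => hgradv _ _ _
  have hHvb : ∀ t i, ‖Hv t i‖ ≤ L := fun t i => hgradv _ _ _
  -- average recursions
  have havgW : ∀ t, wb (t + 1) = wb t - η (t + 1) • ((m : ℝ)⁻¹ • ∑ i, Gw t i) := by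
    intro t
    have h1 : ∑ i, w (t + 1) i = (∑ l, w t l) - η (t + 1) • ∑ i, Gw t i := by
      rw [Finset.sum_congr rfl fun i (_ : i ∈ univ) => hwrec t i, Finset.sum_sub_distrib,
        ← Finset.smul_sum]
      congr 1
      rw [Finset.sum_comm]
      rw [Finset.sum_congr rfl fun l (_ : l ∈ univ) => (Finset.sum_smul).symm]
      simp [hcol]
    show (m : ℝ)⁻¹ • ∑ i, w (t + 1) i = _
    rw [h1, smul_sub, smul_comm]
  have havgW' : ∀ t, wb' (t + 1) = wb' t - η (t + 1) • ((m : ℝ)⁻¹ • ∑ i, Gw' t i) := by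
    intro t
    have h1 : ∑ i, w' (t + 1) i = (∑ l, w' t l) - η (t + 1) • ∑ i, Gw' t i := by
      rw [Finset.sum_congr rfl fun i (_ : i ∈ univ) => hw'rec t i, Finset.sum_sub_distrib,
        ← Finset.smul_sum]
      congr 1
      rw [Finset.sum_comm]
      rw [Finset.sum_congr rfl fun l (_ : l ∈ univ) => (Finset.sum_smul).symm]
      simp [hcol]
    show (m : ℝ)⁻¹ • ∑ i, w' (t + 1) i = _
    rw [h1, smul_sub, smul_comm]
  have havgV : ∀ t, vb (t + 1) = vb t + η (t + 1) • ((m : ℝ)⁻¹ • ∑ i, Gv t i) := by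
    intro t
    have h1 : ∑ i, v (t + 1) i = (∑ l, v t l) + η (t + 1) • ∑ i, Gv t i := by
      rw [Finset.sum_congr rfl fun i (_ : i ∈ univ) => hvrec t i, Finset.sum_add_distrib,
        ← Finset.smul_sum]
      congr 1
      rw [Finset.sum_comm]
      rw [Finset.sum_congr rfl fun l (_ : l ∈ univ) => (Finset.sum_smul).symm]
      simp [hcol]
    show (m : ℝ)⁻¹ • ∑ i, v (t + 1) i = _
    rw [h1, smul_add, smul_comm]
  have havgV' : ∀ t, vb' (t + 1) = vb' t + η (t + 1) • ((m : ℝ)⁻¹ • ∑ i, Gv' t i) := by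
    intro t
    have h1 : ∑ i, v' (t + 1) i = (∑ l, v' t l) + η (t + 1) • ∑ i, Gv' t i := by
      rw [Finset.sum_congr rfl fun i (_ : i ∈ univ) => hv'rec t i, Finset.sum_add_distrib,
        ← Finset.smul_sum]
      congr 1
      rw [Finset.sum_comm]
      rw [Finset.sum_congr rfl fun l (_ : l ∈ univ) => (Finset.sum_smul).symm]
      simp [hcol]
    show (m : ℝ)⁻¹ • ∑ i, v' (t + 1) i = _
    rw [h1, smul_add, smul_comm]
  -- difference recursions
  have hDwrec : ∀ t, Dw (t + 1) = Dw t - η (t + 1) • ((m : ℝ)⁻¹ • ∑ i, (Gw t i - Gw' t i)) := by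
    intro t
    show wb (t + 1) - wb' (t + 1) = _
    rw [havgW t, havgW' t]
    have hs : ∑ i, (Gw t i - Gw' t i) = (∑ i, Gw t i) - ∑ i, Gw' t i := Finset.sum_sub_distrib _ _
    rw [hs, smul_sub, smul_sub]
    show _ = (wb t - wb' t) - _
    abel
  have hDvrec : ∀ t, Dv (t + 1) = Dv t + η (t + 1) • ((m : ℝ)⁻¹ • ∑ i, (Gv t i - Gv' t i)) := by
    intro t
    show vb (t + 1) - vb' (t + 1) = _
    rw [havgV t, havgV' t]
    have hs : ∑ i, (Gv t i - Gv' t i) = (∑ i, Gv t i) - ∑ i, Gv' t i := Finset.sum_sub_distrib _ _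
    rw [hs, smul_sub, smul_sub]
    show _ = (vb t - vb' t) + _
    abel
  -- consensus error bounds
  have hconsw : ∀ t, Real.sqrt (∑ i, ‖w t i - wb t‖ ^ 2) ≤ L * Real.sqrt m * σ t := by
    have := my_consensus hm P hPsymm hProw lam hlam0 hconsW L hL.le η hη w
      (fun t i => -Gw (t - 1) i)
      (fun t i => by rw [norm_neg]; exact hGwb _ _) w0 hw0
      (fun t i => by rw [hwrec t i, sub_eq_add_neg, ← smul_neg]; norm_num; rfl)
    exact this
  have hconsw' : ∀ t, Real.sqrt (∑ i, ‖w' t i - wb' t‖ ^ 2) ≤ L * Real.sqrt m * σ t := by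
    have := my_consensus hm P hPsymm hProw lam hlam0 hconsW L hL.le η hη w'
      (fun t i => -Gw' (t - 1) i)
      (fun t i => by rw [norm_neg]; exact hGw'b _ _) w0 hw'0
      (fun t i => by rw [hw'rec t i, sub_eq_add_neg, ← smul_neg]; norm_num; rfl)
    exact this
  have hconsv : ∀ t, Real.sqrt (∑ i, ‖v t i - vb t‖ ^ 2) ≤ L * Real.sqrt m * σ t := by
    have := my_consensus hm P hPsymm hProw lam hlam0 hconsV L hL.le η hη v
      (fun t i => Gv (t - 1) i)
      (fun t i => hGvb _ _) v0 hv0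
      (fun t i => by rw [hvrec t i]; norm_num; rfl)
    exact this
  have hconsv' : ∀ t, Real.sqrt (∑ i, ‖v' t i - vb' t‖ ^ 2) ≤ L * Real.sqrt m * σ t := by
    have := my_consensus hm P hPsymm hProw lam hlam0 hconsV L hL.le η hη v'
      (fun t i => Gv' (t - 1) i)
      (fun t i => hGv'b _ _) v0 hv'0
      (fun t i => by rw [hv'rec t i]; norm_num; rfl)
    exact this
  -- l1 consensus bounds
  have hl1w : ∀ t, (m : ℝ)⁻¹ * ∑ i, ‖w t i - wb t‖ ≤ L * σ t := by
    intro t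
    have h1 : ∑ i, ‖w t i - wb t‖ ≤ Real.sqrt m * Real.sqrt (∑ i, ‖w t i - wb t‖ ^ 2) :=
      my_sum_le_sqrt _ fun i => norm_nonneg _
    have h2 : Real.sqrt m * Real.sqrt (∑ i, ‖w t i - wb t‖ ^ 2)
        ≤ Real.sqrt m * (L * Real.sqrt m * σ t) :=
      mul_le_mul_of_nonneg_left (hconsw t) (Real.sqrt_nonneg _)
    have h3 : Real.sqrt m * (L * Real.sqrt m * σ t) = (m : ℝ) * (L * σ t) := by
      rw [show Real.sqrt m * (L * Real.sqrt m * σ t)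
        = (Real.sqrt m * Real.sqrt m) * (L * σ t) by ring,
        Real.mul_self_sqrt (Nat.cast_nonneg m)]
    calc (m : ℝ)⁻¹ * ∑ i, ‖w t i - wb t‖ ≤ (m : ℝ)⁻¹ * ((m : ℝ) * (L * σ t)) := by
          apply mul_le_mul_of_nonneg_left _ (inv_nonneg.mpr hm0.le)
          rw [← h3]; exact le_trans h1 h2
      _ = L * σ t := by field_simp
  have hl1w' : ∀ t, (m : ℝ)⁻¹ * ∑ i, ‖w' t i - wb' t‖ ≤ L * σ t := by
    intro t
    have h1 : ∑ i, ‖w' t i - wb' t‖ ≤ Real.sqrt m * Real.sqrt (∑ i, ‖w' t i - wb' t‖ ^ 2) :=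
      my_sum_le_sqrt _ fun i => norm_nonneg _
    have h2 : Real.sqrt m * Real.sqrt (∑ i, ‖w' t i - wb' t‖ ^ 2)
        ≤ Real.sqrt m * (L * Real.sqrt m * σ t) :=
      mul_le_mul_of_nonneg_left (hconsw' t) (Real.sqrt_nonneg _)
    have h3 : Real.sqrt m * (L * Real.sqrt m * σ t) = (m : ℝ) * (L * σ t) := by
      rw [show Real.sqrt m * (L * Real.sqrt m * σ t)
        = (Real.sqrt m * Real.sqrt m) * (L * σ t) by ring,
        Real.mul_self_sqrt (Nat.cast_nonneg m)]
    calc (m : ℝ)⁻¹ * ∑ i, ‖w' t i - wb' t‖ ≤ (m : ℝ)⁻¹ * ((m : ℝ) * (L * σ t)) := by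
          apply mul_le_mul_of_nonneg_left _ (inv_nonneg.mpr hm0.le)
          rw [← h3]; exact le_trans h1 h2
      _ = L * σ t := by field_simp
  have hl1v : ∀ t, (m : ℝ)⁻¹ * ∑ i, ‖v t i - vb t‖ ≤ L * σ t := by
    intro t
    have h1 : ∑ i, ‖v t i - vb t‖ ≤ Real.sqrt m * Real.sqrt (∑ i, ‖v t i - vb t‖ ^ 2) :=
      my_sum_le_sqrt _ fun i => norm_nonneg _
    have h2 : Real.sqrt m * Real.sqrt (∑ i, ‖v t i - vb t‖ ^ 2)
        ≤ Real.sqrt m * (L * Real.sqrt m * σ t) :=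
      mul_le_mul_of_nonneg_left (hconsv t) (Real.sqrt_nonneg _)
    have h3 : Real.sqrt m * (L * Real.sqrt m * σ t) = (m : ℝ) * (L * σ t) := by
      rw [show Real.sqrt m * (L * Real.sqrt m * σ t)
        = (Real.sqrt m * Real.sqrt m) * (L * σ t) by ring,
        Real.mul_self_sqrt (Nat.cast_nonneg m)]
    calc (m : ℝ)⁻¹ * ∑ i, ‖v t i - vb t‖ ≤ (m : ℝ)⁻¹ * ((m : ℝ) * (L * σ t)) := by
          apply mul_le_mul_of_nonneg_left _ (inv_nonneg.mpr hm0.le)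
          rw [← h3]; exact le_trans h1 h2
      _ = L * σ t := by field_simp
  have hl1v' : ∀ t, (m : ℝ)⁻¹ * ∑ i, ‖v' t i - vb' t‖ ≤ L * σ t := by
    intro t
    have h1 : ∑ i, ‖v' t i - vb' t‖ ≤ Real.sqrt m * Real.sqrt (∑ i, ‖v' t i - vb' t‖ ^ 2) :=
      my_sum_le_sqrt _ fun i => norm_nonneg _
    have h2 : Real.sqrt m * Real.sqrt (∑ i, ‖v' t i - vb' t‖ ^ 2)
        ≤ Real.sqrt m * (L * Real.sqrt m * σ t) :=
      mul_le_mul_of_nonneg_left (hconsv' t) (Real.sqrt_nonneg _)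
    have h3 : Real.sqrt m * (L * Real.sqrt m * σ t) = (m : ℝ) * (L * σ t) := by
      rw [show Real.sqrt m * (L * Real.sqrt m * σ t)
        = (Real.sqrt m * Real.sqrt m) * (L * σ t) by ring,
        Real.mul_self_sqrt (Nat.cast_nonneg m)]
    calc (m : ℝ)⁻¹ * ∑ i, ‖v' t i - vb' t‖ ≤ (m : ℝ)⁻¹ * ((m : ℝ) * (L * σ t)) := by
          apply mul_le_mul_of_nonneg_left _ (inv_nonneg.mpr hm0.le)
          rw [← h3]; exact le_trans h1 h2
      _ = L * σ t := by field_simp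
  -- one-step master inequality
  have hstep : ∀ t, U (t + 1) ≤ U t + 8 * L ^ 2 * η (t + 1) ^ 2 + 16 * L ^ 2 * (η (t + 1) * σ t)
      + (4 * Real.sqrt 2 * L / m) * (η (t + 1) * χ (t + 1)) * u t := by
    intro t
    set aw : W := (m : ℝ)⁻¹ • ∑ i, (Gw t i - Gw' t i) with haw
    set av : V := (m : ℝ)⁻¹ • ∑ i, (Gv t i - Gv' t i) with hav
    have hDwr : Dw (t + 1) = Dw t - η (t + 1) • aw := hDwrec t
    have hDvr : Dv (t + 1) = Dv t + η (t + 1) • av := hDvrec t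
    have e1 : ‖Dw t - η (t + 1) • aw‖ ^ 2
        = ‖Dw t‖ ^ 2 - 2 * (η (t + 1) * ⟪Dw t, aw⟫) + η (t + 1) ^ 2 * ‖aw‖ ^ 2 := by
      rw [norm_sub_sq_real, real_inner_smul_right, norm_smul, Real.norm_eq_abs, mul_pow, sq_abs]
    have e2 : ‖Dv t + η (t + 1) • av‖ ^ 2
        = ‖Dv t‖ ^ 2 + 2 * (η (t + 1) * ⟪Dv t, av⟫) + η (t + 1) ^ 2 * ‖av‖ ^ 2 := by
      rw [norm_add_sq_real, real_inner_smul_right, norm_smul, Real.norm_eq_abs, mul_pow, sq_abs]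
    have hUexp : U (t + 1) = U t - 2 * η (t + 1) * (⟪Dw t, aw⟫ - ⟪Dv t, av⟫)
        + η (t + 1) ^ 2 * (‖aw‖ ^ 2 + ‖av‖ ^ 2) := by
      show ‖Dw (t + 1)‖ ^ 2 + ‖Dv (t + 1)‖ ^ 2 = _
      rw [hDwr, hDvr, e1, e2]
      show _ = ‖Dw t‖ ^ 2 + ‖Dv t‖ ^ 2 - _ + _
      ring
    -- norm bounds on aw, av
    have hawb : ‖aw‖ ≤ 2 * L := by
      have h1 : ‖∑ i, (Gw t i - Gw' t i)‖ ≤ ∑ i : Fin m, (2 * L) := by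
        refine (norm_sum_le _ _).trans (Finset.sum_le_sum fun i _ => ?_)
        calc ‖Gw t i - Gw' t i‖ ≤ ‖Gw t i‖ + ‖Gw' t i‖ := norm_sub_le _ _
          _ ≤ 2 * L := by have := hGwb t i; have := hGw'b t i; linarith
      rw [haw, norm_smul, Real.norm_eq_abs, abs_of_nonneg (inv_nonneg.mpr hm0.le)]
      have h2 : ∑ _i : Fin m, (2 * L) = (m : ℝ) * (2 * L) := by
        rw [Finset.sum_const, Finset.card_univ, Fintype.card_fin, nsmul_eq_mul]
      calc (m : ℝ)⁻¹ * ‖∑ i, (Gw t i - Gw' t i)‖ ≤ (m : ℝ)⁻¹ * ((m : ℝ) * (2 * L)) := by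
            apply mul_le_mul_of_nonneg_left _ (inv_nonneg.mpr hm0.le)
            rw [← h2]; exact h1
        _ = 2 * L := by field_simp
    have havb : ‖av‖ ≤ 2 * L := by
      have h1 : ‖∑ i, (Gv t i - Gv' t i)‖ ≤ ∑ i : Fin m, (2 * L) := by
        refine (norm_sum_le _ _).trans (Finset.sum_le_sum fun i _ => ?_)
        calc ‖Gv t i - Gv' t i‖ ≤ ‖Gv t i‖ + ‖Gv' t i‖ := norm_sub_le _ _
          _ ≤ 2 * L := by have := hGvb t i; have := hGv'b t i; linarith
      rw [hav, norm_smul, Real.norm_eq_abs, abs_of_nonneg (inv_nonneg.mpr hm0.le)]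
      have h2 : ∑ _i : Fin m, (2 * L) = (m : ℝ) * (2 * L) := by
        rw [Finset.sum_const, Finset.card_univ, Fintype.card_fin, nsmul_eq_mul]
      calc (m : ℝ)⁻¹ * ‖∑ i, (Gv t i - Gv' t i)‖ ≤ (m : ℝ)⁻¹ * ((m : ℝ) * (2 * L)) := by
            apply mul_le_mul_of_nonneg_left _ (inv_nonneg.mpr hm0.le)
            rw [← h2]; exact h1
        _ = 2 * L := by field_simp
    -- norm of Dw, Dv vs u
    have hDwu : ‖Dw t‖ + ‖Dv t‖ ≤ Real.sqrt 2 * u t := by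
      calc ‖Dw t‖ + ‖Dv t‖ = Real.sqrt ((‖Dw t‖ + ‖Dv t‖) ^ 2) :=
            (Real.sqrt_sq (by positivity)).symm
        _ ≤ Real.sqrt (2 * U t) := by
            apply Real.sqrt_le_sqrt
            have := sq_nonneg (‖Dw t‖ - ‖Dv t‖)
            show _ ≤ 2 * (‖Dw t‖ ^ 2 + ‖Dv t‖ ^ 2)
            nlinarith
        _ = Real.sqrt 2 * u t := by rw [Real.sqrt_mul (by norm_num : (0:ℝ) ≤ 2)]
    -- the inner product decomposition bound, per worker
    have hterm : ∀ i : Fin m,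
        -(⟪Dw t, Gw t i - Gw' t i⟫ - ⟪Dv t, Gv t i - Gv' t i⟫)
        ≤ 2 * L * (‖w t i - wb t‖ + ‖w' t i - wb' t‖ + ‖v t i - vb t‖ + ‖v' t i - vb' t‖)
          + (if ζ (t + 1) i = ζ' (t + 1) i then 0 else 2 * L * (‖Dw t‖ + ‖Dv t‖)) := by
      intro i
      have hdec : ⟪Dw t, Gw t i - Gw' t i⟫ - ⟪Dv t, Gv t i - Gv' t i⟫
          = (⟪w t i - w' t i, Gw t i - Hw t i⟫ - ⟪v t i - v' t i, Gv t i - Hv t i⟫)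
            + ((⟪Dw t - (w t i - w' t i), Gw t i - Hw t i⟫
                - ⟪Dv t - (v t i - v' t i), Gv t i - Hv t i⟫)
              + (⟪Dw t, Hw t i - Gw' t i⟫ - ⟪Dv t, Hv t i - Gv' t i⟫)) := by
        simp only [inner_sub_left, inner_sub_right]
        ring
      have h1 : 0 ≤ ⟪w t i - w' t i, Gw t i - Hw t i⟫
          - ⟪v t i - v' t i, Gv t i - Hv t i⟫ :=
        my_monotone (fun a b => f a b (ζ (t + 1) i))
          (fun b => hconv b _) (fun a => hconc a _)
          (fun b => hdiffw b _) (fun a => hdiffv a _)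
          (w t i) (w' t i) (v t i) (v' t i)
      have hGwH : ‖Gw t i - Hw t i‖ ≤ 2 * L := by
        calc ‖Gw t i - Hw t i‖ ≤ ‖Gw t i‖ + ‖Hw t i‖ := norm_sub_le _ _
          _ ≤ 2 * L := by have := hGwb t i; have := hHwb t i; linarith
      have hGvH : ‖Gv t i - Hv t i‖ ≤ 2 * L := by
        calc ‖Gv t i - Hv t i‖ ≤ ‖Gv t i‖ + ‖Hv t i‖ := norm_sub_le _ _
          _ ≤ 2 * L := by have := hGvb t i; have := hHvb t i; linarith
      have hDwi : ‖Dw t - (w t i - w' t i)‖ ≤ ‖w t i - wb t‖ + ‖w' t i - wb' t‖ := by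
        have he : Dw t - (w t i - w' t i) = -(w t i - wb t) + (w' t i - wb' t) := by
          show (wb t - wb' t) - (w t i - w' t i) = _
          abel
        rw [he]
        calc ‖-(w t i - wb t) + (w' t i - wb' t)‖
            ≤ ‖-(w t i - wb t)‖ + ‖w' t i - wb' t‖ := norm_add_le _ _
          _ = ‖w t i - wb t‖ + ‖w' t i - wb' t‖ := by rw [norm_neg]
      have hDvi : ‖Dv t - (v t i - v' t i)‖ ≤ ‖v t i - vb t‖ + ‖v' t i - vb' t‖ := by
        have he : Dv t - (v t i - v' t i) = -(v t i - vb t) + (v' t i - vb' t) := by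
          show (vb t - vb' t) - (v t i - v' t i) = _
          abel
        rw [he]
        calc ‖-(v t i - vb t) + (v' t i - vb' t)‖
            ≤ ‖-(v t i - vb t)‖ + ‖v' t i - vb' t‖ := norm_add_le _ _
          _ = ‖v t i - vb t‖ + ‖v' t i - vb' t‖ := by rw [norm_neg]
      have h2a := my_abs_inner_le (Dw t - (w t i - w' t i)) (Gw t i - Hw t i) hDwi hGwH
      have h2b := my_abs_inner_le (Dv t - (v t i - v' t i)) (Gv t i - Hv t i) hDvi hGvH
      have h3 : -(⟪Dw t, Hw t i - Gw' t i⟫ - ⟪Dv t, Hv t i - Gv' t i⟫)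
          ≤ (if ζ (t + 1) i = ζ' (t + 1) i then 0 else 2 * L * (‖Dw t‖ + ‖Dv t‖)) := by
        by_cases hz : ζ (t + 1) i = ζ' (t + 1) i
        · rw [if_pos hz]
          have hww : Hw t i = Gw' t i := by rw [hHw, hGw']; simp only [hz]
          have hvv : Hv t i = Gv' t i := by rw [hHv, hGv']; simp only [hz]
          rw [hww, hvv, sub_self, sub_self, inner_zero_right, inner_zero_right]
          norm_num
        · rw [if_neg hz]
          have hHG : ‖Hw t i - Gw' t i‖ ≤ 2 * L := by
            calc ‖Hw t i - Gw' t i‖ ≤ ‖Hw t i‖ + ‖Gw' t i‖ := norm_sub_le _ _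
              _ ≤ 2 * L := by have := hHwb t i; have := hGw'b t i; linarith
          have hHGv : ‖Hv t i - Gv' t i‖ ≤ 2 * L := by
            calc ‖Hv t i - Gv' t i‖ ≤ ‖Hv t i‖ + ‖Gv' t i‖ := norm_sub_le _ _
              _ ≤ 2 * L := by have := hHvb t i; have := hGv'b t i; linarith
          have ha := my_abs_inner_le (Dw t) (Hw t i - Gw' t i) (le_refl _) hHG
          have hb := my_abs_inner_le (Dv t) (Hv t i - Gv' t i) (le_refl _) hHGv
          have ha' := abs_le.mp ha
          have hb' := abs_le.mp hb
          have : ‖Dw t‖ * (2 * L) + ‖Dv t‖ * (2 * L) = 2 * L * (‖Dw t‖ + ‖Dv t‖) := by ring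
          linarith [ha'.1, ha'.2, hb'.1, hb'.2]
      have h2a' := abs_le.mp h2a
      have h2b' := abs_le.mp h2b
      rw [hdec]
      have hnn : (‖w t i - wb t‖ + ‖w' t i - wb' t‖) * (2 * L)
          + (‖v t i - vb t‖ + ‖v' t i - vb' t‖) * (2 * L)
          = 2 * L * (‖w t i - wb t‖ + ‖w' t i - wb' t‖ + ‖v t i - vb t‖ + ‖v' t i - vb' t‖) := by
        ring
      linarith [h2a'.1, h2a'.2, h2b'.1, h2b'.2]
    -- sum the per-worker bounds
    have hK : ⟪Dw t, aw⟫ - ⟪Dv t, av⟫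
        = (m : ℝ)⁻¹ * ∑ i, (⟪Dw t, Gw t i - Gw' t i⟫ - ⟪Dv t, Gv t i - Gv' t i⟫) := by
      rw [haw, hav, real_inner_smul_right, real_inner_smul_right, inner_sum, inner_sum,
        ← mul_sub, ← Finset.sum_sub_distrib]
    have hsumterm : ∑ i, -(⟪Dw t, Gw t i - Gw' t i⟫ - ⟪Dv t, Gv t i - Gv' t i⟫)
        ≤ (∑ i, 2 * L * (‖w t i - wb t‖ + ‖w' t i - wb' t‖ + ‖v t i - vb t‖ + ‖v' t i - vb' t‖))
          + χ (t + 1) * (2 * L * (‖Dw t‖ + ‖Dv t‖)) := by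
      have h1 := Finset.sum_le_sum fun i (_ : i ∈ univ) => hterm i
      rw [Finset.sum_add_distrib] at h1
      refine h1.trans (add_le_add le_rfl ?_)
      rw [Finset.sum_eq_single r (fun i _ hi => by rw [if_pos (hζ (t + 1) i hi)])
        (fun h => absurd (Finset.mem_univ r) h)]
      by_cases hzr : ζ (t + 1) r = ζ' (t + 1) r
      · rw [if_pos hzr]
        have : (0:ℝ) ≤ 2 * L * (‖Dw t‖ + ‖Dv t‖) := by positivity
        exact mul_nonneg (hχ0 (t + 1)) this
      · rw [if_neg hzr, hχ1 (t + 1) hzr, one_mul]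
    have hKlow : -(⟪Dw t, aw⟫ - ⟪Dv t, av⟫)
        ≤ 8 * L ^ 2 * σ t + (2 * Real.sqrt 2 * L / m) * χ (t + 1) * u t := by
      have hneg : -(⟪Dw t, aw⟫ - ⟪Dv t, av⟫)
          = (m : ℝ)⁻¹ * ∑ i, -(⟪Dw t, Gw t i - Gw' t i⟫ - ⟪Dv t, Gv t i - Gv' t i⟫) := by
        rw [hK, Finset.sum_neg_distrib]
        ring
      have h2 := mul_le_mul_of_nonneg_left hsumterm (inv_nonneg.mpr hm0.le)
      have hsplit : (m : ℝ)⁻¹ * ((∑ i, 2 * L * (‖w t i - wb t‖ + ‖w' t i - wb' t‖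
            + ‖v t i - vb t‖ + ‖v' t i - vb' t‖))
          + χ (t + 1) * (2 * L * (‖Dw t‖ + ‖Dv t‖)))
          = 2 * L * ((m : ℝ)⁻¹ * ∑ i, ‖w t i - wb t‖ + (m : ℝ)⁻¹ * ∑ i, ‖w' t i - wb' t‖
              + (m : ℝ)⁻¹ * ∑ i, ‖v t i - vb t‖ + (m : ℝ)⁻¹ * ∑ i, ‖v' t i - vb' t‖)
            + (m : ℝ)⁻¹ * (χ (t + 1) * (2 * L * (‖Dw t‖ + ‖Dv t‖))) := by
        have e : ∑ i, 2 * L * (‖w t i - wb t‖ + ‖w' t i - wb' t‖ + ‖v t i - vb t‖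
              + ‖v' t i - vb' t‖)
            = 2 * L * ((∑ i, ‖w t i - wb t‖) + (∑ i, ‖w' t i - wb' t‖)
              + (∑ i, ‖v t i - vb t‖) + (∑ i, ‖v' t i - vb' t‖)) := by
          rw [← Finset.mul_sum]
          congr 1
          rw [Finset.sum_add_distrib, Finset.sum_add_distrib, Finset.sum_add_distrib]
        rw [e]
        ring
      have h3 : 2 * L * ((m : ℝ)⁻¹ * ∑ i, ‖w t i - wb t‖ + (m : ℝ)⁻¹ * ∑ i, ‖w' t i - wb' t‖
              + (m : ℝ)⁻¹ * ∑ i, ‖v t i - vb t‖ + (m : ℝ)⁻¹ * ∑ i, ‖v' t i - vb' t‖)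
          ≤ 2 * L * (L * σ t + L * σ t + L * σ t + L * σ t) := by
        apply mul_le_mul_of_nonneg_left _ (by positivity)
        exact add_le_add (add_le_add (add_le_add (hl1w t) (hl1w' t)) (hl1v t)) (hl1v' t)
      have h4 : (m : ℝ)⁻¹ * (χ (t + 1) * (2 * L * (‖Dw t‖ + ‖Dv t‖)))
          ≤ (m : ℝ)⁻¹ * (χ (t + 1) * (2 * L * (Real.sqrt 2 * u t))) := by
        apply mul_le_mul_of_nonneg_left _ (inv_nonneg.mpr hm0.le)
        apply mul_le_mul_of_nonneg_left _ (hχ0 (t + 1))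
        exact mul_le_mul_of_nonneg_left hDwu (by positivity)
      calc -(⟪Dw t, aw⟫ - ⟪Dv t, av⟫)
          = (m : ℝ)⁻¹ * ∑ i, -(⟪Dw t, Gw t i - Gw' t i⟫ - ⟪Dv t, Gv t i - Gv' t i⟫) := hneg
        _ ≤ (m : ℝ)⁻¹ * ((∑ i, 2 * L * (‖w t i - wb t‖ + ‖w' t i - wb' t‖
              + ‖v t i - vb t‖ + ‖v' t i - vb' t‖))
            + χ (t + 1) * (2 * L * (‖Dw t‖ + ‖Dv t‖))) := h2
        _ = _ := hsplit
        _ ≤ 2 * L * (L * σ t + L * σ t + L * σ t + L * σ t)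
            + (m : ℝ)⁻¹ * (χ (t + 1) * (2 * L * (Real.sqrt 2 * u t))) := add_le_add h3 h4
        _ = 8 * L ^ 2 * σ t + (2 * Real.sqrt 2 * L / m) * χ (t + 1) * u t := by
            field_simp
            ring
    -- combine everything
    have h2η : (0:ℝ) ≤ 2 * η (t + 1) := by linarith [hη (t + 1)]
    have hKmul : -(2 * η (t + 1) * (⟪Dw t, aw⟫ - ⟪Dv t, av⟫))
        ≤ 16 * L ^ 2 * (η (t + 1) * σ t)
          + (4 * Real.sqrt 2 * L / m) * (η (t + 1) * χ (t + 1)) * u t := by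
      have h := mul_le_mul_of_nonneg_left hKlow h2η
      calc -(2 * η (t + 1) * (⟪Dw t, aw⟫ - ⟪Dv t, av⟫))
          = 2 * η (t + 1) * (-(⟪Dw t, aw⟫ - ⟪Dv t, av⟫)) := by ring
        _ ≤ 2 * η (t + 1) * (8 * L ^ 2 * σ t
            + (2 * Real.sqrt 2 * L / m) * χ (t + 1) * u t) := h
        _ = 16 * L ^ 2 * (η (t + 1) * σ t)
            + (4 * Real.sqrt 2 * L / m) * (η (t + 1) * χ (t + 1)) * u t := by ring
    have hη2 : η (t + 1) ^ 2 * (‖aw‖ ^ 2 + ‖av‖ ^ 2) ≤ 8 * L ^ 2 * η (t + 1) ^ 2 := by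
      have ha2 : ‖aw‖ ^ 2 + ‖av‖ ^ 2 ≤ 8 * L ^ 2 := by
        nlinarith [norm_nonneg aw, norm_nonneg av, hawb, havb]
      calc η (t + 1) ^ 2 * (‖aw‖ ^ 2 + ‖av‖ ^ 2) ≤ η (t + 1) ^ 2 * (8 * L ^ 2) :=
            mul_le_mul_of_nonneg_left ha2 (sq_nonneg _)
        _ = 8 * L ^ 2 * η (t + 1) ^ 2 := by ring
    rw [hUexp]
    linarith [hKmul, hη2]
  -- initial condition
  have hU00 : U 0 = 0 := by
    have hw00 : Dw 0 = 0 := by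
      have h : ∑ i, w 0 i = ∑ i, w' 0 i := by
        rw [Finset.sum_congr rfl fun i (_ : i ∈ univ) => hw0 i,
          Finset.sum_congr rfl fun i (_ : i ∈ univ) => hw'0 i]
      show (m : ℝ)⁻¹ • ∑ i, w 0 i - (m : ℝ)⁻¹ • ∑ i, w' 0 i = 0
      rw [h, sub_self]
    have hv00 : Dv 0 = 0 := by
      have h : ∑ i, v 0 i = ∑ i, v' 0 i := by
        rw [Finset.sum_congr rfl fun i (_ : i ∈ univ) => hv0 i,
          Finset.sum_congr rfl fun i (_ : i ∈ univ) => hv'0 i]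
      show (m : ℝ)⁻¹ • ∑ i, v 0 i - (m : ℝ)⁻¹ • ∑ i, v' 0 i = 0
      rw [h, sub_self]
    show ‖Dw 0‖ ^ 2 + ‖Dv 0‖ ^ 2 = 0
    rw [hw00, hv00, norm_zero]
    norm_num
  -- the inner sum function
  set Sg : ℕ → ℝ := fun t => ∑ q ∈ Finset.Icc 1 (t - 1), η q * lam ^ (t - q - 1) with hSg
  have hSgσ : ∀ t, Sg (t + 1) = σ t := by
    intro t
    show ∑ q ∈ Finset.Icc 1 (t + 1 - 1), η q * lam ^ (t + 1 - q - 1)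
      = ∑ q ∈ Finset.Icc 1 t, η q * lam ^ (t - q)
    rw [Nat.add_sub_cancel]
    refine Finset.sum_congr rfl fun q hq => ?_
    have hq' : t + 1 - q - 1 = t - q := by omega
    rw [hq']
  have hSg0 : ∀ t, 0 ≤ Sg t :=
    fun t => Finset.sum_nonneg fun q _ => mul_nonneg (hη q) (pow_nonneg hlam0 _)
  -- max over the trajectory
  have hne : (Finset.range (T + 1)).Nonempty := ⟨0, Finset.mem_range.mpr (Nat.succ_pos T)⟩
  set M := (Finset.range (T + 1)).sup' hne u with hM
  have hMle : ∀ s, s ≤ T → u s ≤ M :=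
    fun s hs => Finset.le_sup' u (Finset.mem_range.mpr (by omega))
  have hM0 : 0 ≤ M := le_trans (hu0 0) (hMle 0 (Nat.zero_le T))
  have hcoef : (0:ℝ) ≤ 4 * Real.sqrt 2 * L / m := by positivity
  have hηχ : ∀ t, 0 ≤ η t * χ t := fun t => mul_nonneg (hη t) (hχ0 t)
  have hB0 : (0:ℝ) ≤ (4 * Real.sqrt 2 * L / m) * ∑ t ∈ Finset.Icc 1 T, η t * χ t :=
    mul_nonneg hcoef (Finset.sum_nonneg fun t _ => hηχ t)
  -- unrolled bound
  have hclaim : ∀ s, s ≤ T → U s ≤ 8 * L ^ 2 * (∑ t ∈ Finset.Icc 1 s, η t ^ 2)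
      + 16 * L ^ 2 * (∑ t ∈ Finset.Icc 1 s, η t * Sg t)
      + (4 * Real.sqrt 2 * L / m) * (∑ t ∈ Finset.Icc 1 s, η t * χ t) * M := by
    intro s
    induction s with
    | zero =>
        intro _
        have hempty : Finset.Icc 1 0 = (∅ : Finset ℕ) := Finset.Icc_eq_empty (by omega)
        rw [hU00, hempty]
        simp
    | succ s ih =>
        intro hsT
        have hsT' : s ≤ T := Nat.le_of_succ_le hsT
        have ihs := ih hsT'
        have hst := hstep s
        have hus : u s ≤ M := hMle s hsT'
        have h1 : (4 * Real.sqrt 2 * L / m) * (η (s + 1) * χ (s + 1)) * u s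
            ≤ (4 * Real.sqrt 2 * L / m) * (η (s + 1) * χ (s + 1)) * M :=
          mul_le_mul_of_nonneg_left hus (mul_nonneg hcoef (hηχ (s + 1)))
        rw [Finset.sum_Icc_succ_top (Nat.le_add_left 1 s),
          Finset.sum_Icc_succ_top (Nat.le_add_left 1 s),
          Finset.sum_Icc_succ_top (Nat.le_add_left 1 s)]
        have hσs : Sg (s + 1) = σ s := hSgσ s
        rw [hσs]
        nlinarith [hst, ihs, h1]
  -- apply at the argmax
  obtain ⟨s₀, hs₀mem, hMs⟩ := Finset.exists_mem_eq_sup' hne u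
  have hs₀T : s₀ ≤ T := by
    have := Finset.mem_range.mp hs₀mem
    omega
  have hA10 : (0:ℝ) ≤ 8 * L ^ 2 * (∑ t ∈ Finset.Icc 1 T, η t ^ 2) :=
    mul_nonneg (by positivity) (Finset.sum_nonneg fun t _ => sq_nonneg _)
  have hA20 : (0:ℝ) ≤ 16 * L ^ 2 * (∑ t ∈ Finset.Icc 1 T, η t * Sg t) :=
    mul_nonneg (by positivity) (Finset.sum_nonneg fun t _ => mul_nonneg (hη t) (hSg0 t))
  have hMsq : M ^ 2 ≤ 8 * L ^ 2 * (∑ t ∈ Finset.Icc 1 T, η t ^ 2)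
      + 16 * L ^ 2 * (∑ t ∈ Finset.Icc 1 T, η t * Sg t)
      + ((4 * Real.sqrt 2 * L / m) * ∑ t ∈ Finset.Icc 1 T, η t * χ t) * M := by
    have h1 : M ^ 2 = U s₀ := by
      rw [hM, hMs]
      exact Real.sq_sqrt (hU0 s₀)
    have h2 := hclaim s₀ hs₀T
    have hsub : Finset.Icc 1 s₀ ⊆ Finset.Icc 1 T := Finset.Icc_subset_Icc_right hs₀T
    have e1 : ∑ t ∈ Finset.Icc 1 s₀, η t ^ 2 ≤ ∑ t ∈ Finset.Icc 1 T, η t ^ 2 :=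
      Finset.sum_le_sum_of_subset_of_nonneg hsub fun t _ _ => sq_nonneg _
    have e2 : ∑ t ∈ Finset.Icc 1 s₀, η t * Sg t ≤ ∑ t ∈ Finset.Icc 1 T, η t * Sg t :=
      Finset.sum_le_sum_of_subset_of_nonneg hsub fun t _ _ => mul_nonneg (hη t) (hSg0 t)
    have e3 : ∑ t ∈ Finset.Icc 1 s₀, η t * χ t ≤ ∑ t ∈ Finset.Icc 1 T, η t * χ t :=
      Finset.sum_le_sum_of_subset_of_nonneg hsub fun t _ _ => hηχ t
    have c1 : 8 * L ^ 2 * (∑ t ∈ Finset.Icc 1 s₀, η t ^ 2)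
        ≤ 8 * L ^ 2 * (∑ t ∈ Finset.Icc 1 T, η t ^ 2) :=
      mul_le_mul_of_nonneg_left e1 (by positivity)
    have c2 : 16 * L ^ 2 * (∑ t ∈ Finset.Icc 1 s₀, η t * Sg t)
        ≤ 16 * L ^ 2 * (∑ t ∈ Finset.Icc 1 T, η t * Sg t) :=
      mul_le_mul_of_nonneg_left e2 (by positivity)
    have c3 : (4 * Real.sqrt 2 * L / m) * (∑ t ∈ Finset.Icc 1 s₀, η t * χ t) * M
        ≤ ((4 * Real.sqrt 2 * L / m) * ∑ t ∈ Finset.Icc 1 T, η t * χ t) * M :=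
      mul_le_mul_of_nonneg_right (mul_le_mul_of_nonneg_left e3 hcoef) hM0
    rw [h1]
    exact h2.trans (add_le_add (add_le_add c1 c2) c3)
  -- solve the quadratic inequality
  have hMbound : M ≤ Real.sqrt (8 * L ^ 2 * (∑ t ∈ Finset.Icc 1 T, η t ^ 2)
      + 16 * L ^ 2 * (∑ t ∈ Finset.Icc 1 T, η t * Sg t))
      + (4 * Real.sqrt 2 * L / m) * ∑ t ∈ Finset.Icc 1 T, η t * χ t := by
    set A : ℝ := 8 * L ^ 2 * (∑ t ∈ Finset.Icc 1 T, η t ^ 2)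
      + 16 * L ^ 2 * (∑ t ∈ Finset.Icc 1 T, η t * Sg t) with hA
    set B : ℝ := (4 * Real.sqrt 2 * L / m) * ∑ t ∈ Finset.Icc 1 T, η t * χ t with hBd
    have hA0 : 0 ≤ A := by linarith [hA10, hA20]
    by_cases hMB : M ≤ B
    · have := Real.sqrt_nonneg A
      linarith
    · push_neg at hMB
      have hq : (M - B) ^ 2 ≤ A := by nlinarith [hMsq, hB0]
      have hs := Real.sqrt_le_sqrt hq
      rw [Real.sqrt_sq (by linarith)] at hs
      linarith
  -- conclude
  have huT : u T ≤ M := hMle T (le_refl T)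
  have hsqrtsplit := my_sqrt_add_le hA10 hA20
  show u T ≤ _
  have hfinal : u T ≤ Real.sqrt (8 * L ^ 2 * (∑ t ∈ Finset.Icc 1 T, η t ^ 2))
      + Real.sqrt (16 * L ^ 2 * (∑ t ∈ Finset.Icc 1 T, η t * Sg t))
      + (4 * Real.sqrt 2 * L / m) * ∑ t ∈ Finset.Icc 1 T, η t * χ t := by
    linarith [huT, hMbound, hsqrtsplit]
  exact hfinal


end MainST18

theorem stmt_18 (d1 d2 m n : ℕ) (hd1 : 1 ≤ d1) (hd2 : 1 ≤ d2) (hm : 1 ≤ m) (hn : 1 ≤ n)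
    {Z : Type*}
    (f : EuclideanSpace ℝ (Fin d1) → EuclideanSpace ℝ (Fin d2) → Z → ℝ)
    (L : ℝ) (hL : 0 < L)
    (hdiffw : ∀ (v : EuclideanSpace ℝ (Fin d2)) (z : Z),
      Differentiable ℝ (fun w => f w v z))
    (hdiffv : ∀ (w : EuclideanSpace ℝ (Fin d1)) (z : Z),
      Differentiable ℝ (fun v => f w v z))
    (hgradw : ∀ (w : EuclideanSpace ℝ (Fin d1)) (v : EuclideanSpace ℝ (Fin d2)) (z : Z),
      ‖gradient (fun u => f u v z) w‖ ≤ L)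
    (hgradv : ∀ (w : EuclideanSpace ℝ (Fin d1)) (v : EuclideanSpace ℝ (Fin d2)) (z : Z),
      ‖gradient (fun u => f w u z) v‖ ≤ L)
    (hconv : ∀ (v : EuclideanSpace ℝ (Fin d2)) (z : Z),
      ConvexOn ℝ Set.univ (fun w => f w v z))
    (hconc : ∀ (w : EuclideanSpace ℝ (Fin d1)) (z : Z),
      ConcaveOn ℝ Set.univ (fun v => f w v z))
    (P : Fin m → Fin m → ℝ)
    (hPsymm : ∀ i l, P i l = P l i)
    (hPnonneg : ∀ i l, 0 ≤ P i l)
    (hProw : ∀ i, ∑ l, P i l = 1)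
    (lam : ℝ) (hlam0 : 0 ≤ lam) (hlam1 : lam < 1)
    (hconsW : ∀ x : Fin m → EuclideanSpace ℝ (Fin d1), ∑ i, x i = 0 →
      ∑ i, ‖∑ l, P i l • x l‖ ^ 2 ≤ lam ^ 2 * ∑ i, ‖x i‖ ^ 2)
    (hconsV : ∀ x : Fin m → EuclideanSpace ℝ (Fin d2), ∑ i, x i = 0 →
      ∑ i, ‖∑ l, P i l • x l‖ ^ 2 ≤ lam ^ 2 * ∑ i, ‖x i‖ ^ 2)
    (S S' : Fin m → Fin n → Z) (j : ℕ → Fin m → Fin n)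
    (η : ℕ → ℝ) (hη : ∀ t, 0 ≤ η t)
    (w0 : EuclideanSpace ℝ (Fin d1)) (v0 : EuclideanSpace ℝ (Fin d2))
    (wS : ℕ → Fin m → EuclideanSpace ℝ (Fin d1))
    (vS : ℕ → Fin m → EuclideanSpace ℝ (Fin d2))
    (hwS0 : ∀ i, wS 0 i = w0) (hvS0 : ∀ i, vS 0 i = v0)
    (hwSrec : ∀ t i, wS (t + 1) i =
      (∑ l, P i l • wS t l) -
        η (t + 1) • gradient (fun u => f u (vS t i) (S i (j (t + 1) i))) (wS t i))
    (hvSrec : ∀ t i, vS (t + 1) i =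
      (∑ l, P i l • vS t l) +
        η (t + 1) • gradient (fun u => f (wS t i) u (S i (j (t + 1) i))) (vS t i))
    (wSrk : Fin m → Fin n → ℕ → Fin m → EuclideanSpace ℝ (Fin d1))
    (vSrk : Fin m → Fin n → ℕ → Fin m → EuclideanSpace ℝ (Fin d2))
    (hwSrk0 : ∀ r k i, wSrk r k 0 i = w0) (hvSrk0 : ∀ r k i, vSrk r k 0 i = v0)
    (hwSrkrec : ∀ r k t i, wSrk r k (t + 1) i =
      (∑ l, P i l • wSrk r k t l) -
        η (t + 1) • gradient
          (fun u => f u (vSrk r k t i)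
            (if i = r ∧ j (t + 1) i = k then S' r k else S i (j (t + 1) i)))
          (wSrk r k t i))
    (hvSrkrec : ∀ r k t i, vSrk r k (t + 1) i =
      (∑ l, P i l • vSrk r k t l) +
        η (t + 1) • gradient
          (fun u => f (wSrk r k t i) u
            (if i = r ∧ j (t + 1) i = k then S' r k else S i (j (t + 1) i)))
          (vSrk r k t i))
    (T : ℕ) (hT : 1 ≤ T) :
    (1 / ((m : ℝ) * n)) * ∑ r : Fin m, ∑ k : Fin n,
        Real.sqrt (‖((m : ℝ)⁻¹ • ∑ i, wS T i) - ((m : ℝ)⁻¹ • ∑ i, wSrk r k T i)‖ ^ 2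
          + ‖((m : ℝ)⁻¹ • ∑ i, vS T i) - ((m : ℝ)⁻¹ • ∑ i, vSrk r k T i)‖ ^ 2)
      ≤ 2 * Real.sqrt 2 * L * Real.sqrt (∑ t ∈ Finset.Icc 1 T, (η t) ^ 2)
        + 4 * L * Real.sqrt (∑ t ∈ Finset.Icc 1 T,
            η t * ∑ q ∈ Finset.Icc 1 (t - 1), η q * lam ^ (t - q - 1))
        + (4 * Real.sqrt 2 * L / ((m : ℝ) * n)) * ∑ t ∈ Finset.Icc 1 T, η t := by
  classical
  have hm0 : (0 : ℝ) < m := by exact_mod_cast hm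
  have hn0 : (0 : ℝ) < n := by exact_mod_cast hn
  set χ : Fin m → Fin n → ℕ → ℝ := fun r k t => if j t r = k then (1:ℝ) else 0 with hχdef
  have key : ∀ (r : Fin m) (k : Fin n),
      Real.sqrt (‖((m : ℝ)⁻¹ • ∑ i, wS T i) - ((m : ℝ)⁻¹ • ∑ i, wSrk r k T i)‖ ^ 2
          + ‖((m : ℝ)⁻¹ • ∑ i, vS T i) - ((m : ℝ)⁻¹ • ∑ i, vSrk r k T i)‖ ^ 2)
      ≤ Real.sqrt (8 * L ^ 2 * ∑ t ∈ Finset.Icc 1 T, η t ^ 2)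
        + Real.sqrt (16 * L ^ 2 * ∑ t ∈ Finset.Icc 1 T,
            η t * ∑ q ∈ Finset.Icc 1 (t - 1), η q * lam ^ (t - q - 1))
        + (4 * Real.sqrt 2 * L / m) * ∑ t ∈ Finset.Icc 1 T, η t * χ r k t := by
    intro r k
    exact aux_main hm f L hL hdiffw hdiffv hgradw hgradv hconv hconc P hPsymm hProw
      lam hlam0 hconsW hconsV η hη w0 v0
      (fun t i => S i (j t i))
      (fun t i => if i = r ∧ j t i = k then S' r k else S i (j t i)) r
      (fun t i hi => by simp [hi])
      (χ r k)
      (fun t => by by_cases h : j t r = k <;> simp [hχdef, h])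
      (fun t hne => by
        by_cases h : j t r = k
        · simp [hχdef, h]
        · exfalso; apply hne; simp [h])
      wS (wSrk r k) vS (vSrk r k) hwS0 hvS0 (hwSrk0 r k) (hvSrk0 r k)
      hwSrec hvSrec (hwSrkrec r k) (hvSrkrec r k) T
  -- swap sums over k and t
  have hswap : ∀ r : Fin m,
      ∑ k : Fin n, ∑ t ∈ Finset.Icc 1 T, η t * χ r k t = ∑ t ∈ Finset.Icc 1 T, η t := by
    intro r
    rw [Finset.sum_comm]
    refine Finset.sum_congr rfl fun t _ => ?_
    have h1 : ∑ k : Fin n, χ r k t = 1 := by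
      rw [hχdef]
      rw [Finset.sum_ite_eq univ (j t r) (fun _ => (1:ℝ))]
      simp
    rw [← Finset.mul_sum, h1, mul_one]
  set C : ℝ := Real.sqrt (8 * L ^ 2 * ∑ t ∈ Finset.Icc 1 T, η t ^ 2)
      + Real.sqrt (16 * L ^ 2 * ∑ t ∈ Finset.Icc 1 T,
          η t * ∑ q ∈ Finset.Icc 1 (t - 1), η q * lam ^ (t - q - 1)) with hC
  have inner_eq : ∀ r : Fin m,
      ∑ k : Fin n, (C + (4 * Real.sqrt 2 * L / m) * ∑ t ∈ Finset.Icc 1 T, η t * χ r k t)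
      = n * C + (4 * Real.sqrt 2 * L / m) * ∑ t ∈ Finset.Icc 1 T, η t := by
    intro r
    rw [Finset.sum_add_distrib, Finset.sum_const, Finset.card_univ, Fintype.card_fin,
      nsmul_eq_mul, ← Finset.mul_sum, hswap r]
  have houter : ∑ r : Fin m, ∑ k : Fin n,
      (C + (4 * Real.sqrt 2 * L / m) * ∑ t ∈ Finset.Icc 1 T, η t * χ r k t)
      = m * (n * C + (4 * Real.sqrt 2 * L / m) * ∑ t ∈ Finset.Icc 1 T, η t) := by
    rw [Finset.sum_congr rfl fun r _ => inner_eq r, Finset.sum_const, Finset.card_univ,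
      Fintype.card_fin, nsmul_eq_mul]
  have hmain : (1 / ((m : ℝ) * n)) * ∑ r : Fin m, ∑ k : Fin n,
        Real.sqrt (‖((m : ℝ)⁻¹ • ∑ i, wS T i) - ((m : ℝ)⁻¹ • ∑ i, wSrk r k T i)‖ ^ 2
          + ‖((m : ℝ)⁻¹ • ∑ i, vS T i) - ((m : ℝ)⁻¹ • ∑ i, vSrk r k T i)‖ ^ 2)
      ≤ C + (4 * Real.sqrt 2 * L / ((m : ℝ) * n)) * ∑ t ∈ Finset.Icc 1 T, η t := by
    have h1 : ∑ r : Fin m, ∑ k : Fin n,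
        Real.sqrt (‖((m : ℝ)⁻¹ • ∑ i, wS T i) - ((m : ℝ)⁻¹ • ∑ i, wSrk r k T i)‖ ^ 2
          + ‖((m : ℝ)⁻¹ • ∑ i, vS T i) - ((m : ℝ)⁻¹ • ∑ i, vSrk r k T i)‖ ^ 2)
        ≤ ∑ r : Fin m, ∑ k : Fin n,
          (C + (4 * Real.sqrt 2 * L / m) * ∑ t ∈ Finset.Icc 1 T, η t * χ r k t) :=
      Finset.sum_le_sum fun r _ => Finset.sum_le_sum fun k _ => key r k
    have h2 := mul_le_mul_of_nonneg_left (h1.trans_eq houter) (by positivity :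
      (0:ℝ) ≤ 1 / ((m : ℝ) * n))
    refine h2.trans_eq ?_
    field_simp
  refine hmain.trans_eq ?_
  have hc1 : Real.sqrt (8 * L ^ 2 * ∑ t ∈ Finset.Icc 1 T, η t ^ 2)
      = 2 * Real.sqrt 2 * L * Real.sqrt (∑ t ∈ Finset.Icc 1 T, η t ^ 2) := by
    rw [show (8:ℝ) * L ^ 2 = (2 * Real.sqrt 2 * L) ^ 2 by
      nlinarith [Real.sq_sqrt (show (0:ℝ) ≤ 2 by norm_num), Real.sqrt_nonneg 2, hL.le],
      Real.sqrt_mul (by positivity), Real.sqrt_sq (by positivity)]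
  have hc2 : Real.sqrt (16 * L ^ 2 * ∑ t ∈ Finset.Icc 1 T,
        η t * ∑ q ∈ Finset.Icc 1 (t - 1), η q * lam ^ (t - q - 1))
      = 4 * L * Real.sqrt (∑ t ∈ Finset.Icc 1 T,
          η t * ∑ q ∈ Finset.Icc 1 (t - 1), η q * lam ^ (t - q - 1)) := by
    rw [show (16:ℝ) * L ^ 2 = (4 * L) ^ 2 by ring,
      Real.sqrt_mul (by positivity), Real.sqrt_sq (by positivity)]
  rw [hC, hc1, hc2]
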